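/- arXiv:1709.09855 — 2 statements merged into one kernel-verified Lean document; each statement's English description precedes it below -/
import Mathlib

section
/- For every γ ∈ ℝ, the first eigenvalue μ(γ, ξ) of the Robin realization on L²(ℝ₊) of H[γ,ξ] = −d²/dt² + (t − ξ)² with boundary condition u'(0) = γ u(0) satisfies lim_{ξ→−∞} μ(γ,ξ) = +∞ and lim_{ξ→+∞} μ(γ,ξ) = 1. -/
open MeasureTheory Set Filter Topology

/-- Membership in the weighted space `B¹(ℝ₊)`:
`u ∈ L²(ℝ₊)`, `u' ∈ L²(ℝ₊)` and `t·u ∈ L²(ℝ₊)`. -/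
def MemB1Half (u : ℝ → ℂ) : Prop :=
  Differentiable ℝ u ∧
  IntegrableOn (fun t => ‖u t‖ ^ 2) (Ioi 0) volume ∧
  IntegrableOn (fun t => ‖deriv u t‖ ^ 2) (Ioi 0) volume ∧
  IntegrableOn (fun t => t ^ 2 * ‖u t‖ ^ 2) (Ioi 0) volume

/-- First eigenvalue `μ(γ,ξ)` of the Robin realization of `-d²/dt² + (t-ξ)²` on `L²(ℝ₊)`
with boundary condition `u'(0) = γ u(0)`, defined via the Rayleigh quotient. -/
noncomputable def robinMu (γ ξ : ℝ) : ℝ :=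
  sInf {r : ℝ | ∃ u : ℝ → ℂ, MemB1Half u ∧
    (0 < ∫ t in Ioi (0:ℝ), ‖u t‖ ^ 2) ∧
    r = ((∫ t in Ioi (0:ℝ), (‖deriv u t‖ ^ 2 + (t - ξ) ^ 2 * ‖u t‖ ^ 2)) + γ * ‖u 0‖ ^ 2) /
      ∫ t in Ioi (0:ℝ), ‖u t‖ ^ 2}

/-- The de Gennes function `Θ(γ) = inf_{ξ ∈ ℝ} μ(γ,ξ)`. -/
noncomputable def Theta (γ : ℝ) : ℝ := ⨅ ξ : ℝ, robinMu γ ξ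

/-!
For a real weight `W` with `W 0 = -γ`, expanding `0 ≤ ‖u' + W u‖²` and integrating the cross term
`W (‖u‖²)'` by parts gives `∫ ‖u'‖² + γ ‖u 0‖² ≥ ∫ (W' - W²) ‖u‖²`, hence
`μ(γ,ξ) ≥ inf_{t > 0} (W' - W² + (t - ξ)²)`. The weight `W = -γ e^{-t}` gives
`μ(γ,ξ) ≥ ξ² - |γ| - γ²` for `ξ ≤ 0`, and `W = t - ξ + (ξ - γ) e^{-t}`, a perturbation of the
logarithmic derivative of the harmonic oscillator ground state, gives
`μ(γ,ξ) ≥ 1 - 2 (ξ - γ) e^{-(ξ + γ - 1)/2}` for `ξ ≥ γ`. Conversely the Gaussian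
`u = e^{-(t - ξ)²/2}` solves `u' + (t - ξ) u = 0`, so the same identity with `W = t - ξ` gives it
the Rayleigh quotient `1 + (γ - ξ) ‖u 0‖² / ‖u‖² ≤ 1` for `ξ ≥ γ`.
-/

theorem integral_Ioi_eq_neg_of_hasDerivAt {E : Type*} [NormedAddCommGroup E] [NormedSpace ℝ E]
    [CompleteSpace E] {a : ℝ} {f f' : ℝ → E}
    (hf : ∀ x ∈ Ici a, HasDerivAt f (f' x) x) (hf_int : IntegrableOn f (Ioi a))
    (hf'_int : IntegrableOn f' (Ioi a)) : ∫ x in Ioi a, f' x = - f a := by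
  have hlim := tendsto_zero_of_hasDerivAt_of_integrableOn_Ioi
    (fun x hx => hf x (Ioi_subset_Ici_self hx)) hf'_int hf_int
  simpa using integral_Ioi_of_hasDerivAt_of_tendsto' hf hf'_int hlim

section GroundState

variable {E : Type*} [NormedAddCommGroup E] [InnerProductSpace ℝ E]

theorem norm_add_smul_sq_eq (x y : E) (w : ℝ) :
    ‖x + w • y‖ ^ 2 = ‖x‖ ^ 2 + w * (2 * inner ℝ y x) + w ^ 2 * ‖y‖ ^ 2 := by
  rw [norm_add_sq_real, real_inner_smul_right, norm_smul, mul_pow, Real.norm_eq_abs, sq_abs,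
    real_inner_comm]
  ring

theorem abs_mul_two_inner_le (x y : E) (w : ℝ) :
    |w * (2 * inner ℝ y x)| ≤ ‖x‖ ^ 2 + w ^ 2 * ‖y‖ ^ 2 := by
  have hxy := abs_real_inner_le_norm y x
  rw [abs_mul, abs_mul, abs_two]
  nlinarith [sq_nonneg (|w| * ‖y‖ - ‖x‖), sq_abs w, abs_nonneg w, norm_nonneg x, norm_nonneg y]

theorem integral_norm_deriv_sq_eq [CompleteSpace E] {u : ℝ → E} (hu : Differentiable ℝ u)
    {W W' : ℝ → ℝ} (hW : ∀ t, HasDerivAt W (W' t) t)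
    (hu_int : IntegrableOn (fun t => ‖u t‖ ^ 2) (Ioi 0))
    (hu'_int : IntegrableOn (fun t => ‖deriv u t‖ ^ 2) (Ioi 0))
    (hWu_int : IntegrableOn (fun t => W t ^ 2 * ‖u t‖ ^ 2) (Ioi 0))
    (hW'u_int : IntegrableOn (fun t => W' t * ‖u t‖ ^ 2) (Ioi 0)) :
    ∫ t in Ioi 0, ‖deriv u t‖ ^ 2 =
      (∫ t in Ioi 0, ‖deriv u t + W t • u t‖ ^ 2) + (∫ t in Ioi 0, (W' t - W t ^ 2) * ‖u t‖ ^ 2)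
        + W 0 * ‖u 0‖ ^ 2 := by
  set D : ℝ → ℝ := fun t => 2 * inner ℝ (u t) (deriv u t)
  have hW_cont : Continuous W := continuous_iff_continuousAt.2 fun t => (hW t).continuousAt
  have hD_meas : AEStronglyMeasurable D (volume.restrict (Ioi 0)) :=
    (hu.continuous.aestronglyMeasurable.inner (aestronglyMeasurable_deriv u _)).const_mul 2
  have hWD_int : IntegrableOn (fun t => W t * D t) (Ioi 0) :=
    (hu'_int.add hWu_int).mono' (hW_cont.aestronglyMeasurable.mul hD_meas)
      (ae_of_all _ fun t => abs_mul_two_inner_le (deriv u t) (u t) (W t))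
  have hWρ_int : IntegrableOn (fun t => W t * ‖u t‖ ^ 2) (Ioi 0) := by
    refine (hu_int.add hWu_int).mono'
      (hW_cont.aestronglyMeasurable.mul (hu.continuous.norm.pow 2).aestronglyMeasurable)
      (ae_of_all _ fun t => ?_)
    rw [Real.norm_eq_abs, abs_mul, abs_of_nonneg (sq_nonneg ‖u t‖)]
    simp only [Pi.add_apply]
    nlinarith [sq_nonneg (|W t| - 1), sq_abs (W t), sq_nonneg ‖u t‖]
  have hparts : ∫ t in Ioi 0, (W' t * ‖u t‖ ^ 2 + W t * D t) = -(W 0 * ‖u 0‖ ^ 2) :=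
    integral_Ioi_eq_neg_of_hasDerivAt (fun t _ => (hW t).mul (hu t).hasDerivAt.norm_sq)
      hWρ_int (hW'u_int.add hWD_int)
  have hsquare : ∫ t in Ioi 0, ‖deriv u t + W t • u t‖ ^ 2 =
      (∫ t in Ioi 0, ‖deriv u t‖ ^ 2) + (∫ t in Ioi 0, W t * D t)
        + ∫ t in Ioi 0, W t ^ 2 * ‖u t‖ ^ 2 := by
    have h := integral_add (hu'_int.add hWD_int) hWu_int
    simp only [Pi.add_apply] at h
    rw [integral_add hu'_int hWD_int] at h
    rw [← h]
    simp_rw [norm_add_smul_sq_eq, D]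
  rw [integral_add hW'u_int hWD_int] at hparts
  simp_rw [sub_mul]
  rw [integral_sub hW'u_int hWu_int]
  linarith

end GroundState

theorem mul_exp_neg_le_one (x : ℝ) : x * Real.exp (-x) ≤ 1 := by
  rw [Real.exp_neg, ← div_eq_mul_inv, div_le_one (Real.exp_pos x)]
  linarith [Real.add_one_le_exp x]

theorem one_sub_le_riccati {γ ξ t : ℝ} (hξ : γ ≤ ξ) (ht : 0 ≤ t) :
    1 - 2 * (ξ - γ) * Real.exp (-((ξ + γ - 1) / 2)) ≤
      (1 - (ξ - γ) * Real.exp (-t)) - (t - ξ + (ξ - γ) * Real.exp (-t)) ^ 2 + (t - ξ) ^ 2 := by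
  -- `T` is where `1 + 2 (t - ξ) + (ξ - γ)` changes sign; beyond it the error term decays like
  -- `(t - T) e^{-(t - T)}`.
  set T := (ξ + γ - 1) / 2
  set e := (ξ - γ) * Real.exp (-t)
  have hγξ : 0 ≤ ξ - γ := sub_nonneg.2 hξ
  have he_nonneg : 0 ≤ e := mul_nonneg hγξ (Real.exp_pos _).le
  have he_le : e ≤ ξ - γ := mul_le_of_le_one_right hγξ (Real.exp_le_one_iff.2 (by linarith))
  have hdecay : e * (t - T) ≤ (ξ - γ) * Real.exp (-T) := by
    have hsplit : e * (t - T) = (ξ - γ) * Real.exp (-T) * ((t - T) * Real.exp (-(t - T))) := by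
      simp only [e]
      rw [show -t = -T + -(t - T) by ring, Real.exp_add]
      ring
    rw [hsplit]
    exact mul_le_of_le_one_right (by positivity) (mul_exp_neg_le_one _)
  have hbracket : e * (1 + 2 * (t - ξ) + e) ≤ e * (2 * (t - T)) :=
    mul_le_mul_of_nonneg_left (by simp only [T]; linarith) he_nonneg
  nlinarith

noncomputable def robinForm (γ ξ : ℝ) (u : ℝ → ℂ) : ℝ :=
  (∫ t in Ioi (0:ℝ), (‖deriv u t‖ ^ 2 + (t - ξ) ^ 2 * ‖u t‖ ^ 2)) + γ * ‖u 0‖ ^ 2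

namespace MemB1Half

variable {u : ℝ → ℂ}

theorem integrableOn_mul_norm_sq (hu : MemB1Half u) {f : ℝ → ℝ} {a b : ℝ}
    (hf : AEStronglyMeasurable f (volume.restrict (Ioi 0)))
    (hbd : ∀ t ∈ Ioi (0:ℝ), |f t| ≤ a + b * t ^ 2) :
    IntegrableOn (fun t => f t * ‖u t‖ ^ 2) (Ioi 0) := by
  refine ((hu.2.1.const_mul a).add (hu.2.2.2.const_mul b)).mono'
    (hf.mul (hu.1.continuous.norm.pow 2).aestronglyMeasurable)
    ((ae_restrict_iff' measurableSet_Ioi).2 (ae_of_all _ fun t ht => ?_))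
  rw [Real.norm_eq_abs, abs_mul, abs_of_nonneg (sq_nonneg ‖u t‖)]
  calc |f t| * ‖u t‖ ^ 2 ≤ (a + b * t ^ 2) * ‖u t‖ ^ 2 := by gcongr; exact hbd t ht
    _ = _ := by simp only [Pi.add_apply]; ring

theorem robinForm_eq (hu : MemB1Half u) (γ ξ : ℝ) {W W' : ℝ → ℝ}
    (hW : ∀ t, HasDerivAt W (W' t) t) {a b m : ℝ}
    (hW_sq : ∀ t ∈ Ioi (0:ℝ), W t ^ 2 ≤ a + b * t ^ 2) (hW' : ∀ t ∈ Ioi (0:ℝ), |W' t| ≤ m) :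
    robinForm γ ξ u = (∫ t in Ioi 0, ‖deriv u t + W t • u t‖ ^ 2)
      + (∫ t in Ioi 0, (W' t - W t ^ 2 + (t - ξ) ^ 2) * ‖u t‖ ^ 2) + (γ + W 0) * ‖u 0‖ ^ 2 := by
  have hW_cont : Continuous W := continuous_iff_continuousAt.2 fun t => (hW t).continuousAt
  have hW'_eq : W' = deriv W := funext fun t => (hW t).deriv.symm
  have hW_int := hu.integrableOn_mul_norm_sq (f := fun t => W t ^ 2)
    (hW_cont.pow 2).aestronglyMeasurable fun t ht => by rw [abs_sq]; exact hW_sq t ht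
  have hW'_int := hu.integrableOn_mul_norm_sq (f := W') (b := 0)
    (hW'_eq ▸ aestronglyMeasurable_deriv W _) fun t ht => by simpa using hW' t ht
  have hV_int := hu.integrableOn_mul_norm_sq (f := fun t => (t - ξ) ^ 2) (a := 2 * ξ ^ 2) (b := 2)
    (by fun_prop) fun t _ => by rw [abs_sq]; nlinarith [sq_nonneg (t + ξ)]
  have hWW'_int : IntegrableOn (fun t => (W' t - W t ^ 2) * ‖u t‖ ^ 2) (Ioi 0) := by
    simpa only [sub_mul, Pi.sub_def] using hW'_int.sub hW_int
  simp_rw [add_mul (W' _ - W _ ^ 2)]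
  rw [robinForm, integral_add hu.2.2.1 hV_int, integral_add hWW'_int hV_int,
    integral_norm_deriv_sq_eq hu.1 hW hu.2.1 hu.2.2.1 hW_int hW'_int]
  ring

theorem mul_le_robinForm (hu : MemB1Half u) {γ ξ c : ℝ} {W W' : ℝ → ℝ}
    (hW : ∀ t, HasDerivAt W (W' t) t)
    {a b m : ℝ} (hW_sq : ∀ t ∈ Ioi (0:ℝ), W t ^ 2 ≤ a + b * t ^ 2)
    (hW' : ∀ t ∈ Ioi (0:ℝ), |W' t| ≤ m) (hW0 : -γ ≤ W 0)
    (hc : ∀ t ∈ Ioi (0:ℝ), c ≤ W' t - W t ^ 2 + (t - ξ) ^ 2) :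
    c * ∫ t in Ioi 0, ‖u t‖ ^ 2 ≤ robinForm γ ξ u := by
  have hW_cont : Continuous W := continuous_iff_continuousAt.2 fun t => (hW t).continuousAt
  have hW'_eq : W' = deriv W := funext fun t => (hW t).deriv.symm
  have hV_int := hu.integrableOn_mul_norm_sq (f := fun t => W' t - W t ^ 2 + (t - ξ) ^ 2)
    (a := m + a + 2 * ξ ^ 2) (b := b + 2)
    (((hW'_eq ▸ aestronglyMeasurable_deriv W _).sub (hW_cont.pow 2).aestronglyMeasurable).add
      (by fun_prop)) fun t ht => by
      have := hW' t ht; have := hW_sq t ht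
      rw [abs_le] at *
      constructor <;> nlinarith [sq_nonneg (t + ξ), sq_nonneg (W t), sq_nonneg (t - ξ)]
  rw [hu.robinForm_eq γ ξ hW hW_sq hW', ← integral_const_mul]
  have hsq : 0 ≤ ∫ t in Ioi 0, ‖deriv u t + W t • u t‖ ^ 2 :=
    setIntegral_nonneg measurableSet_Ioi fun t _ => sq_nonneg _
  have hpot := setIntegral_mono_on (hu.2.1.const_mul c) hV_int measurableSet_Ioi
    fun t ht => mul_le_mul_of_nonneg_right (hc t ht) (sq_nonneg ‖u t‖)
  nlinarith [sq_nonneg ‖u 0‖]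

theorem sub_mul_le_robinForm (hu : MemB1Half u) {γ ξ c : ℝ}
    (hc : ∀ t ∈ Ioi (0:ℝ), c ≤ (t - ξ) ^ 2) :
    (c - (|γ| + γ ^ 2)) * ∫ t in Ioi 0, ‖u t‖ ^ 2 ≤ robinForm γ ξ u := by
  have hW (t : ℝ) : HasDerivAt (fun t => -γ * Real.exp (-t)) (γ * Real.exp (-t)) t := by
    simpa using ((hasDerivAt_neg t).exp).const_mul (-γ)
  have hexp {t : ℝ} (ht : t ∈ Ioi (0:ℝ)) : Real.exp (-t) ≤ 1 :=
    Real.exp_le_one_iff.2 (by linarith [ht.out])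
  have hW_sq {t : ℝ} (ht : t ∈ Ioi (0:ℝ)) : (-γ * Real.exp (-t)) ^ 2 ≤ γ ^ 2 := by
    rw [mul_pow, neg_sq]
    exact mul_le_of_le_one_right (sq_nonneg γ) (pow_le_one₀ (Real.exp_pos _).le (hexp ht))
  have hW'_abs {t : ℝ} (ht : t ∈ Ioi (0:ℝ)) : |γ * Real.exp (-t)| ≤ |γ| := by
    rw [abs_mul, Real.abs_exp]
    exact mul_le_of_le_one_right (abs_nonneg γ) (hexp ht)
  refine hu.mul_le_robinForm hW (a := γ ^ 2) (b := 0) (m := |γ|)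
    (fun t ht => by simpa using hW_sq ht) (fun t ht => hW'_abs ht) (by simp) fun t ht => ?_
  linarith [hc t ht, hW_sq ht, neg_abs_le (γ * Real.exp (-t)), hW'_abs ht]

theorem one_sub_mul_le_robinForm (hu : MemB1Half u) {γ ξ : ℝ} (hξ : γ ≤ ξ) :
    (1 - 2 * (ξ - γ) * Real.exp (-((ξ + γ - 1) / 2))) * ∫ t in Ioi 0, ‖u t‖ ^ 2 ≤
      robinForm γ ξ u := by
  have hW (t : ℝ) : HasDerivAt (fun t => t - ξ + (ξ - γ) * Real.exp (-t))
      (1 - (ξ - γ) * Real.exp (-t)) t :=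
    (((hasDerivAt_id' t).sub_const ξ).add
      (((hasDerivAt_neg t).exp).const_mul (ξ - γ))).congr_deriv (by ring)
  have hγξ : 0 ≤ ξ - γ := sub_nonneg.2 hξ
  have hexp {t : ℝ} (ht : t ∈ Ioi (0:ℝ)) : (ξ - γ) * Real.exp (-t) ≤ ξ - γ :=
    mul_le_of_le_one_right hγξ (Real.exp_le_one_iff.2 (by linarith [ht.out]))
  refine hu.mul_le_robinForm hW (a := 4 * ξ ^ 2 + 2 * (ξ - γ) ^ 2) (b := 4) (m := 1 + (ξ - γ))
    (fun t ht => ?_) (fun t ht => ?_) (by simp) (fun t ht => one_sub_le_riccati hξ ht.out.le)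
  all_goals have he : 0 ≤ (ξ - γ) * Real.exp (-t) := mul_nonneg hγξ (Real.exp_pos _).le
  · nlinarith [sq_nonneg (t + ξ), sq_nonneg (t - ξ - (ξ - γ) * Real.exp (-t)), hexp ht]
  · rw [abs_le]
    constructor <;> linarith [hexp ht]

end MemB1Half

noncomputable def shiftedGaussian (ξ t : ℝ) : ℂ := (Real.exp (-(t - ξ) ^ 2 / 2) : ℝ)

theorem hasDerivAt_shiftedGaussian (ξ t : ℝ) :
    HasDerivAt (shiftedGaussian ξ) (-(t - ξ) • shiftedGaussian ξ t) t := by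
  have h : HasDerivAt (fun t => -(t - ξ) ^ 2 / 2) (-(t - ξ)) t :=
    ((((hasDerivAt_id' t).sub_const ξ).pow 2).neg.div_const 2).congr_deriv (by norm_num; ring)
  refine h.exp.ofReal_comp.congr_deriv ?_
  rw [shiftedGaussian, Complex.real_smul, ← Complex.ofReal_mul, mul_comm]

theorem norm_shiftedGaussian_sq (ξ t : ℝ) :
    ‖shiftedGaussian ξ t‖ ^ 2 = Real.exp (-(t - ξ) ^ 2) := by
  rw [shiftedGaussian, Complex.norm_real, Real.norm_of_nonneg (Real.exp_pos _).le, sq,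
    ← Real.exp_add]
  ring_nf

theorem memB1Half_shiftedGaussian (ξ : ℝ) : MemB1Half (shiftedGaussian ξ) := by
  have hdiff : Differentiable ℝ (shiftedGaussian ξ) := fun t =>
    (hasDerivAt_shiftedGaussian ξ t).differentiableAt
  have hderiv : deriv (shiftedGaussian ξ) = fun t => -(t - ξ) • shiftedGaussian ξ t :=
    funext fun t => (hasDerivAt_shiftedGaussian ξ t).deriv
  have hρ : Integrable fun t => Real.exp (-(t - ξ) ^ 2) := by
    simpa using (integrable_exp_neg_mul_sq one_pos).comp_sub_right ξ
  have hκ : Integrable fun t => (t - ξ) ^ 2 * Real.exp (-(t - ξ) ^ 2) := by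
    simpa using
      (integrable_rpow_mul_exp_neg_mul_sq one_pos (s := 2) (by norm_num)).comp_sub_right ξ
  refine ⟨hdiff, ?_, ?_, ?_⟩
  · simpa only [norm_shiftedGaussian_sq] using hρ.integrableOn
  · simpa only [hderiv, norm_smul, mul_pow, Real.norm_eq_abs, sq_abs, neg_sq,
      norm_shiftedGaussian_sq] using hκ.integrableOn
  · refine ((hκ.const_mul 2).add (hρ.const_mul (2 * ξ ^ 2))).integrableOn.mono'
        ((continuous_pow 2).mul (hdiff.continuous.norm.pow 2)).aestronglyMeasurable
      (ae_of_all _ fun t => ?_)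
    rw [norm_shiftedGaussian_sq, Real.norm_of_nonneg (by positivity), Pi.add_apply]
    nlinarith [Real.exp_pos (-(t - ξ) ^ 2), sq_nonneg (t - 2 * ξ)]

theorem integral_norm_shiftedGaussian_sq_pos (ξ : ℝ) :
    0 < ∫ t in Ioi 0, ‖shiftedGaussian ξ t‖ ^ 2 := by
  rw [setIntegral_pos_iff_support_of_nonneg_ae (ae_of_all _ fun t => sq_nonneg _)
    (memB1Half_shiftedGaussian ξ).2.1]
  have hsupp : Function.support (fun t => ‖shiftedGaussian ξ t‖ ^ 2) = univ := by
    ext t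
    simp [norm_shiftedGaussian_sq, (Real.exp_pos _).ne']
  simp [hsupp]

theorem robinForm_shiftedGaussian (γ ξ : ℝ) :
    robinForm γ ξ (shiftedGaussian ξ) =
      (∫ t in Ioi 0, ‖shiftedGaussian ξ t‖ ^ 2) + (γ - ξ) * ‖shiftedGaussian ξ 0‖ ^ 2 := by
  have hzero (t : ℝ) : deriv (shiftedGaussian ξ) t + (t - ξ) • shiftedGaussian ξ t = 0 := by
    rw [(hasDerivAt_shiftedGaussian ξ t).deriv, neg_smul, neg_add_cancel]
  rw [(memB1Half_shiftedGaussian ξ).robinForm_eq γ ξ (fun t => (hasDerivAt_id' t).sub_const ξ)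
    (a := 2 * ξ ^ 2) (b := 2) (m := 1) (fun t _ => by nlinarith [sq_nonneg (t + ξ)])
    (fun t _ => by simp)]
  simp only [hzero, norm_zero, ne_eq, OfNat.ofNat_ne_zero, not_false_eq_true, zero_pow,
    integral_zero, zero_add, sub_add_cancel, one_mul]
  ring

theorem le_robinMu {γ ξ c : ℝ}
    (h : ∀ u, MemB1Half u → c * ∫ t in Ioi 0, ‖u t‖ ^ 2 ≤ robinForm γ ξ u) :
    c ≤ robinMu γ ξ := by
  refine le_csInf ⟨_, shiftedGaussian ξ, memB1Half_shiftedGaussian ξ,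
    integral_norm_shiftedGaussian_sq_pos ξ, rfl⟩ ?_
  rintro r ⟨u, hu, hpos, rfl⟩
  exact (le_div_iff₀ hpos).2 (h u hu)

theorem robinMu_le {γ ξ : ℝ} {u : ℝ → ℂ} (hu : MemB1Half u)
    (hpos : 0 < ∫ t in Ioi 0, ‖u t‖ ^ 2) :
    robinMu γ ξ ≤ robinForm γ ξ u / ∫ t in Ioi 0, ‖u t‖ ^ 2 := by
  refine csInf_le ⟨0 - (|γ| + γ ^ 2), ?_⟩ ⟨u, hu, hpos, rfl⟩
  rintro r ⟨v, hv, hvpos, rfl⟩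
  exact (le_div_iff₀ hvpos).2 (hv.sub_mul_le_robinForm fun t _ => sq_nonneg _)

theorem robinMu_le_one {γ ξ : ℝ} (hξ : γ ≤ ξ) : robinMu γ ξ ≤ 1 := by
  have hpos := integral_norm_shiftedGaussian_sq_pos ξ
  refine (robinMu_le (memB1Half_shiftedGaussian ξ) hpos).trans ?_
  rw [div_le_one hpos, robinForm_shiftedGaussian]
  nlinarith [sq_nonneg ‖shiftedGaussian ξ 0‖]

theorem tendsto_mul_exp_neg_half_atTop (γ : ℝ) :
    Tendsto (fun ξ => 2 * (ξ - γ) * Real.exp (-((ξ + γ - 1) / 2))) atTop (𝓝 0) := by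
  have hy : Tendsto (fun ξ : ℝ => (ξ + γ - 1) / 2) atTop atTop :=
    ((tendsto_atTop_add_const_right _ (γ - 1) tendsto_id).atTop_div_const two_pos).congr
      fun ξ => by simp only [id]; ring
  have hlim : Tendsto (fun y : ℝ => 4 * (y ^ 1 * Real.exp (-y)) + (2 - 4 * γ) * Real.exp (-y))
      atTop (𝓝 0) := by
    simpa using ((Real.tendsto_pow_mul_exp_neg_atTop_nhds_zero 1).const_mul 4).add
      (Real.tendsto_exp_neg_atTop_nhds_zero.const_mul (2 - 4 * γ))
  exact (hlim.comp hy).congr fun ξ => by simp only [Function.comp_apply]; ring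

/-- For every `γ ∈ ℝ`, `μ(γ,ξ) → +∞` as `ξ → -∞` and `μ(γ,ξ) → 1` as `ξ → +∞`. -/
theorem robinMu_limits (γ : ℝ) :
    Tendsto (fun ξ => robinMu γ ξ) atBot atTop ∧
    Tendsto (fun ξ => robinMu γ ξ) atTop (nhds 1) := by
  constructor
  · have hsq : Tendsto (fun ξ : ℝ => ξ ^ 2 - (|γ| + γ ^ 2)) atBot atTop :=
      tendsto_atTop_add_const_right _ _ <|
        ((tendsto_pow_atTop two_ne_zero).comp tendsto_neg_atBot_atTop).congr fun ξ => by simp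
    refine tendsto_atTop_mono' _ ?_ hsq
    filter_upwards [eventually_le_atBot 0] with ξ hξ
    exact le_robinMu fun u hu => hu.sub_mul_le_robinForm fun t ht => by nlinarith [ht.out]
  · have hlower := (tendsto_const_nhds (x := (1:ℝ))).sub (tendsto_mul_exp_neg_half_atTop γ)
    rw [sub_zero] at hlower
    refine tendsto_of_tendsto_of_tendsto_of_le_of_le' hlower tendsto_const_nhds ?_ ?_
    all_goals filter_upwards [eventually_ge_atTop γ] with ξ hξ
    · exact le_robinMu fun u hu => hu.one_sub_mul_le_robinForm hξ
    · exact robinMu_le_one hξ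
end

section
/- There exist constants C₀ > 0 and γ₀ > 0 such that for all γ ≥ γ₀, Θ(γ) ≥ 1 − C₀ γ e^{−γ²}. -/
/-!
Writing `v = u' + (t - ξ) u`, one has `‖v‖² = ‖u'‖² + (t - ξ)² ‖u‖² + (t - ξ) (‖u‖²)'`, and
an integration by parts turns the Robin form into
`∫ ‖u'‖² + (t - ξ)² ‖u‖² + γ ‖u 0‖² = ∫ ‖u‖² + ∫ ‖v‖² + (γ - ξ) ‖u 0‖²`,
so only `ξ > γ` needs work. There the boundary value is controlled through
`w = exp (t² / 2 - ξ t) • u`, whose derivative is `exp (t² / 2 - ξ t) • v`: integrating from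
`0` to a point `p ∈ (γ, γ + 1]` where `‖u p‖² ≤ ∫ ‖u‖²`, Cauchy–Schwarz together with
`∫₀ᵖ exp (t² - 2 ξ t) ≤ 1 / (2 ξ - p)` gives
`(ξ - γ) ‖u 0‖² ≤ 2 (ξ - γ) exp (p² - 2 ξ p) ∫ ‖u‖² + ∫ ‖v‖²`,
and `2 (ξ - γ) exp (p² - 2 ξ p) ≤ exp (-γ²) / γ`.
-/

open MeasureTheory Set Filter Topology

open Real
open scoped RealInnerProductSpace

theorem norm_add_smul_sq {E : Type*} [NormedAddCommGroup E] [InnerProductSpace ℝ E]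
    (a b : E) (r : ℝ) : ‖a + r • b‖ ^ 2 = ‖a‖ ^ 2 + r ^ 2 * ‖b‖ ^ 2 + r * (2 * ⟪b, a⟫) := by
  rw [norm_add_sq_real, norm_smul, real_inner_smul_right, real_inner_comm, mul_pow,
    Real.norm_eq_abs, sq_abs]
  ring

theorem sq_integral_mul_le_of_nonneg {α : Type*} [MeasurableSpace α] {μ : Measure α}
    {f g : α → ℝ} (hf0 : 0 ≤ᵐ[μ] f) (hg0 : 0 ≤ᵐ[μ] g) (hf : MemLp f 2 μ) (hg : MemLp g 2 μ) :
    (∫ a, f a * g a ∂μ) ^ 2 ≤ (∫ a, f a ^ 2 ∂μ) * ∫ a, g a ^ 2 ∂μ := by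
  have h := integral_mul_le_Lp_mul_Lq_of_nonneg Real.HolderConjugate.two_two hf0 hg0
    (by simpa using hf) (by simpa using hg)
  simp only [Real.rpow_two] at h
  have hF : 0 ≤ ∫ a, f a ^ 2 ∂μ := integral_nonneg fun _ => sq_nonneg _
  have hG : 0 ≤ ∫ a, g a ^ 2 ∂μ := integral_nonneg fun _ => sq_nonneg _
  have hfg : 0 ≤ ∫ a, f a * g a ∂μ :=
    integral_nonneg_of_ae (by filter_upwards [hf0, hg0] with a ha hb using mul_nonneg ha hb)
  calc (∫ a, f a * g a ∂μ) ^ 2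
      ≤ ((∫ a, f a ^ 2 ∂μ) ^ (1 / 2 : ℝ) * (∫ a, g a ^ 2 ∂μ) ^ (1 / 2 : ℝ)) ^ 2 := by gcongr
    _ = (∫ a, f a ^ 2 ∂μ) * ∫ a, g a ^ 2 ∂μ := by
      rw [mul_pow, ← Real.sqrt_eq_rpow, ← Real.sqrt_eq_rpow, Real.sq_sqrt hF, Real.sq_sqrt hG]

theorem norm_le_norm_add_setIntegral_norm_deriv {E : Type*} [NormedAddCommGroup E]
    [NormedSpace ℝ E] [CompleteSpace E] {w w' : ℝ → E} {a b : ℝ} (hab : a ≤ b)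
    (hw : ∀ t ∈ Icc a b, HasDerivAt w (w' t) t) (hint : IntegrableOn w' (Ioc a b)) :
    ‖w a‖ ≤ ‖w b‖ + ∫ t in Ioc a b, ‖w' t‖ := by
  have hFTC := intervalIntegral.integral_eq_sub_of_hasDerivAt (by rwa [uIcc_of_le hab])
    ((intervalIntegrable_iff_integrableOn_Ioc_of_le hab).2 hint)
  rw [intervalIntegral.integral_of_le hab] at hFTC
  calc ‖w a‖ = ‖w b - ∫ t in Ioc a b, w' t‖ := by rw [hFTC, sub_sub_cancel]
    _ ≤ ‖w b‖ + ‖∫ t in Ioc a b, w' t‖ := norm_sub_le _ _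
    _ ≤ ‖w b‖ + ∫ t in Ioc a b, ‖w' t‖ := by gcongr; exact norm_integral_le_integral_norm _

theorem exists_mem_Ioc_le_setIntegral_Ioi {g : ℝ → ℝ} {a b : ℝ} (hab : a ≤ b)
    (hg0 : ∀ t, 0 ≤ g t) (hg : IntegrableOn g (Ioi a)) :
    ∃ p ∈ Ioc b (b + 1), g p ≤ ∫ t in Ioi a, g t := by
  have hsub : Ioc b (b + 1) ⊆ Ioi a := fun t ht => hab.trans_lt ht.1
  obtain ⟨p, hp, hgp⟩ := exists_le_setAverage (by simp) (by simp) (hg.mono_set hsub)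
  refine ⟨p, hp, hgp.trans ?_⟩
  rw [setAverage_eq, Real.volume_real_Ioc, add_sub_cancel_left, max_eq_left zero_le_one,
    inv_one, one_smul]
  exact setIntegral_mono_set hg (ae_of_all _ hg0) hsub.eventuallyLE

theorem setIntegral_exp_sq_sub_mul_le {ξ p : ℝ} (hpξ : p < 2 * ξ) :
    ∫ t in Ioc 0 p, exp (t ^ 2 / 2 - ξ * t) ^ 2 ≤ 1 / (2 * ξ - p) := by
  have hexp : IntegrableOn (fun t => exp ((p - 2 * ξ) * t)) (Ioi 0) :=
    integrableOn_exp_mul_Ioi (by linarith) 0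
  calc ∫ t in Ioc 0 p, exp (t ^ 2 / 2 - ξ * t) ^ 2
      ≤ ∫ t in Ioc 0 p, exp ((p - 2 * ξ) * t) := by
        refine setIntegral_mono_on ?_ (hexp.mono_set Ioc_subset_Ioi_self) measurableSet_Ioc
          fun t ht => ?_
        · exact Continuous.integrableOn_Ioc (by fun_prop)
        · rw [← exp_nat_mul, exp_le_exp]
          nlinarith [ht.1, ht.2]
    _ ≤ ∫ t in Ioi 0, exp ((p - 2 * ξ) * t) :=
        setIntegral_mono_set hexp (ae_of_all _ fun _ => (exp_pos _).le)
          Ioc_subset_Ioi_self.eventuallyLE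
    _ = 1 / (2 * ξ - p) := by
        rw [integral_exp_mul_Ioi (by linarith), mul_zero, exp_zero, neg_div, ← div_neg, neg_sub]

theorem two_mul_sub_mul_exp_sq_le {γ ξ p : ℝ} (hγ : 0 < γ) (hξ : γ ≤ ξ)
    (hp : p ∈ Icc γ (γ + 1)) :
    2 * (ξ - γ) * exp (p ^ 2 / 2 - ξ * p) ^ 2 ≤ exp (-γ ^ 2) / γ := by
  set y := 2 * γ * (ξ - γ)
  have hy : y ≤ exp (y - 1) := by linarith [add_one_le_exp (y - 1)]
  have hexp : exp (p ^ 2 / 2 - ξ * p) ^ 2 ≤ exp (-γ ^ 2) * exp (1 - y) := by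
    rw [← exp_nat_mul, ← exp_add, exp_le_exp]
    nlinarith [hp.1, hp.2, mul_nonneg (sub_nonneg.2 hp.1) (sub_nonneg.2 hξ)]
  rw [le_div_iff₀ hγ]
  calc 2 * (ξ - γ) * exp (p ^ 2 / 2 - ξ * p) ^ 2 * γ
      ≤ y * (exp (-γ ^ 2) * exp (1 - y)) := by
        rw [show 2 * (ξ - γ) * exp (p ^ 2 / 2 - ξ * p) ^ 2 * γ =
          y * exp (p ^ 2 / 2 - ξ * p) ^ 2 by ring]
        gcongr
    _ ≤ exp (y - 1) * (exp (-γ ^ 2) * exp (1 - y)) := by gcongr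
    _ = exp (-γ ^ 2) := by rw [mul_left_comm, ← exp_add]; simp

theorem hasDerivAt_exp_smul {E : Type*} [NormedAddCommGroup E] [NormedSpace ℝ E] {u : ℝ → E}
    (ξ : ℝ) {t : ℝ} (hu : DifferentiableAt ℝ u t) :
    HasDerivAt (fun t => exp (t ^ 2 / 2 - ξ * t) • u t)
      (exp (t ^ 2 / 2 - ξ * t) • (deriv u t + (t - ξ) • u t)) t := by
  have hφ : HasDerivAt (fun t => t ^ 2 / 2 - ξ * t) (t - ξ) t :=
    (((hasDerivAt_pow 2 t).div_const 2).fun_sub ((hasDerivAt_id' t).const_mul ξ)).congr_deriv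
      (by norm_num)
  refine (hφ.exp.smul hu.hasDerivAt).congr_deriv ?_
  rw [smul_add, smul_smul, mul_comm, add_comm]

namespace MemB1Half

variable {u : ℝ → ℂ}

theorem integrableOn_sq_sub_mul (hu : MemB1Half u) (ξ : ℝ) :
    IntegrableOn (fun t => (t - ξ) ^ 2 * ‖u t‖ ^ 2) (Ioi 0) := by
  refine ((hu.2.2.2.const_mul 2).add (hu.2.1.const_mul (2 * ξ ^ 2))).mono'
    (by have := hu.1.continuous; fun_prop) (ae_of_all _ fun t => ?_)
  dsimp only [Pi.add_apply]
  rw [Real.norm_of_nonneg (by positivity)]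
  nlinarith [mul_nonneg (sq_nonneg (t + ξ)) (sq_nonneg ‖u t‖)]

theorem integrableOn_sub_mul (hu : MemB1Half u) (ξ : ℝ) :
    IntegrableOn (fun t => (t - ξ) * ‖u t‖ ^ 2) (Ioi 0) := by
  refine ((hu.2.1.add (hu.integrableOn_sq_sub_mul ξ)).div_const 2).mono'
    (by have := hu.1.continuous; fun_prop) (ae_of_all _ fun t => ?_)
  dsimp only [Pi.add_apply]
  rw [norm_mul, Real.norm_eq_abs, Real.norm_of_nonneg (by positivity)]
  nlinarith [mul_nonneg (sq_nonneg (|t - ξ| - 1)) (sq_nonneg ‖u t‖), sq_abs (t - ξ)]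

theorem integrableOn_sub_mul_inner (hu : MemB1Half u) (ξ : ℝ) :
    IntegrableOn (fun t => (t - ξ) * (2 * ⟪u t, deriv u t⟫)) (Ioi 0) := by
  refine (hu.2.2.1.add (hu.integrableOn_sq_sub_mul ξ)).mono'
    (by have := hu.1.continuous; fun_prop) (ae_of_all _ fun t => ?_)
  have h := abs_real_inner_le_norm (u t) (deriv u t)
  simp only [norm_mul, Real.norm_eq_abs, abs_two, Pi.add_apply]
  nlinarith [sq_nonneg (|t - ξ| * ‖u t‖ - ‖deriv u t‖), sq_abs (t - ξ),
    mul_le_mul_of_nonneg_left h (abs_nonneg (t - ξ))]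

theorem integrableOn_norm_sq_deriv_add (hu : MemB1Half u) (ξ : ℝ) :
    IntegrableOn (fun t => ‖deriv u t + (t - ξ) • u t‖ ^ 2) (Ioi 0) := by
  simp only [norm_add_smul_sq]
  exact (hu.2.2.1.add (hu.integrableOn_sq_sub_mul ξ)).add (hu.integrableOn_sub_mul_inner ξ)

theorem integral_norm_sq_add_sub_mul_inner (hu : MemB1Half u) (ξ : ℝ) :
    ∫ t in Ioi 0, (‖u t‖ ^ 2 + (t - ξ) * (2 * ⟪u t, deriv u t⟫)) = ξ * ‖u 0‖ ^ 2 := by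
  have hderiv : ∀ t ∈ Ici (0 : ℝ), HasDerivAt (fun t => (t - ξ) * ‖u t‖ ^ 2)
      (‖u t‖ ^ 2 + (t - ξ) * (2 * ⟪u t, deriv u t⟫)) t := fun t _ =>
    (((hasDerivAt_id' t).sub_const ξ).fun_mul (hu.1 t).hasDerivAt.norm_sq).congr_deriv (by ring)
  have hint := hu.2.1.add (hu.integrableOn_sub_mul_inner ξ)
  have hlim := tendsto_zero_of_hasDerivAt_of_integrableOn_Ioi
    (fun t ht => hderiv t (Ioi_subset_Ici_self ht)) hint (hu.integrableOn_sub_mul ξ)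
  rw [integral_Ioi_of_hasDerivAt_of_tendsto' hderiv hint hlim]
  ring

theorem integral_energy_eq (hu : MemB1Half u) (ξ : ℝ) :
    ∫ t in Ioi 0, (‖deriv u t‖ ^ 2 + (t - ξ) ^ 2 * ‖u t‖ ^ 2) =
      (∫ t in Ioi 0, ‖u t‖ ^ 2) + (∫ t in Ioi 0, ‖deriv u t + (t - ξ) • u t‖ ^ 2)
        - ξ * ‖u 0‖ ^ 2 := by
  have hQ : IntegrableOn (fun t => ‖deriv u t‖ ^ 2 + (t - ξ) ^ 2 * ‖u t‖ ^ 2) (Ioi 0) :=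
    hu.2.2.1.add (hu.integrableOn_sq_sub_mul ξ)
  have hcross := hu.integrableOn_sub_mul_inner ξ
  simp only [norm_add_smul_sq]
  rw [integral_add hQ hcross, ← hu.integral_norm_sq_add_sub_mul_inner ξ,
    integral_add hu.2.1 hcross]
  ring

theorem sub_mul_norm_sq_le (hu : MemB1Half u) {γ ξ : ℝ} (hγ : 1 ≤ γ) (hξ : γ < ξ) :
    (ξ - γ) * ‖u 0‖ ^ 2 ≤ exp (-γ ^ 2) / γ * (∫ t in Ioi 0, ‖u t‖ ^ 2)
      + ∫ t in Ioi 0, ‖deriv u t + (t - ξ) • u t‖ ^ 2 := by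
  set v := fun t => deriv u t + (t - ξ) • u t
  obtain ⟨p, hp, hup⟩ := exists_mem_Ioc_le_setIntegral_Ioi (by linarith : (0 : ℝ) ≤ γ)
    (fun t => sq_nonneg ‖u t‖) hu.2.1
  have hp0 : 0 ≤ p := by linarith [hp.1]
  have hvI := hu.integrableOn_norm_sq_deriv_add ξ
  have hv : MemLp v 2 (volume.restrict (Ioc 0 p)) :=
    (memLp_two_iff_integrable_sq_norm (by have := hu.1.continuous; fun_prop)).2
      (hvI.mono_set Ioc_subset_Ioi_self)
  have hφ : MemLp (fun t => exp (t ^ 2 / 2 - ξ * t)) 2 (volume.restrict (Ioc 0 p)) :=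
    (memLp_two_iff_integrable_sq (by fun_prop)).2 (Continuous.integrableOn_Ioc (by fun_prop))
  set A := exp (p ^ 2 / 2 - ξ * p) * ‖u p‖
  set K := ∫ t in Ioc 0 p, exp (t ^ 2 / 2 - ξ * t) * ‖v t‖
  have hbdry : ‖u 0‖ ≤ A + K := by
    have h := norm_le_norm_add_setIntegral_norm_deriv hp0
      (fun t _ => hasDerivAt_exp_smul ξ (hu.1 t)) (memLp_one_iff_integrable.1 (hv.smul (𝕜 := ℝ) hφ))
    simp only [norm_smul, Real.norm_eq_abs, abs_exp] at h
    convert h using 1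
    simp
  have hCS : K ^ 2 ≤ 1 / (2 * ξ - p) * ∫ t in Ioi 0, ‖v t‖ ^ 2 :=
    (sq_integral_mul_le_of_nonneg (ae_of_all _ fun _ => (exp_pos _).le)
      (ae_of_all _ fun _ => norm_nonneg _) hφ hv.norm).trans
      (mul_le_mul (setIntegral_exp_sq_sub_mul_le (by linarith [hp.2]))
        (setIntegral_mono_set hvI (ae_of_all _ fun _ => sq_nonneg _)
          Ioc_subset_Ioi_self.eventuallyLE)
        (integral_nonneg fun _ => sq_nonneg _) (one_div_nonneg.2 (by linarith [hp.2])))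
  have hsmall := two_mul_sub_mul_exp_sq_le (by linarith) hξ.le ⟨hp.1.le, hp.2⟩
  have hJ : 0 ≤ ∫ t in Ioi 0, ‖v t‖ ^ 2 := integral_nonneg fun _ => sq_nonneg _
  have hKJ : 2 * (ξ - γ) * K ^ 2 ≤ ∫ t in Ioi 0, ‖v t‖ ^ 2 :=
    calc 2 * (ξ - γ) * K ^ 2
        ≤ 2 * (ξ - γ) * (1 / (2 * ξ - p) * ∫ t in Ioi 0, ‖v t‖ ^ 2) := by gcongr
      _ = 2 * (ξ - γ) / (2 * ξ - p) * ∫ t in Ioi 0, ‖v t‖ ^ 2 := by ring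
      _ ≤ ∫ t in Ioi 0, ‖v t‖ ^ 2 :=
          mul_le_of_le_one_left hJ ((div_le_one (by linarith [hp.2])).2 (by linarith [hp.2]))
  calc (ξ - γ) * ‖u 0‖ ^ 2 ≤ (ξ - γ) * (2 * A ^ 2 + 2 * K ^ 2) := by
        gcongr
        nlinarith [pow_le_pow_left₀ (norm_nonneg _) hbdry 2, sq_nonneg (A - K)]
    _ = 2 * (ξ - γ) * exp (p ^ 2 / 2 - ξ * p) ^ 2 * ‖u p‖ ^ 2 + 2 * (ξ - γ) * K ^ 2 := by ring
    _ ≤ _ := add_le_add (mul_le_mul hsmall hup (sq_nonneg _) (by positivity)) hKJ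

theorem one_sub_exp_div_mul_integral_le (hu : MemB1Half u) {γ : ℝ} (hγ : 1 ≤ γ) (ξ : ℝ) :
    (1 - exp (-γ ^ 2) / γ) * ∫ t in Ioi 0, ‖u t‖ ^ 2 ≤
      (∫ t in Ioi 0, (‖deriv u t‖ ^ 2 + (t - ξ) ^ 2 * ‖u t‖ ^ 2)) + γ * ‖u 0‖ ^ 2 := by
  have hN : 0 ≤ ∫ t in Ioi 0, ‖u t‖ ^ 2 := integral_nonneg fun _ => sq_nonneg _
  have hJ : 0 ≤ ∫ t in Ioi 0, ‖deriv u t + (t - ξ) • u t‖ ^ 2 :=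
    integral_nonneg fun _ => sq_nonneg _
  have hε : 0 ≤ exp (-γ ^ 2) / γ * ∫ t in Ioi 0, ‖u t‖ ^ 2 := by positivity
  rw [hu.integral_energy_eq ξ]
  rcases le_or_gt ξ γ with hξ | hξ
  · nlinarith [mul_nonneg (sub_nonneg.2 hξ) (sq_nonneg ‖u 0‖)]
  · linarith [hu.sub_mul_norm_sq_le hγ hξ]

end MemB1Half

theorem exists_memB1Half_integral_pos :
    ∃ u : ℝ → ℂ, MemB1Half u ∧ 0 < ∫ t in Ioi 0, ‖u t‖ ^ 2 := by
  have hg (t : ℝ) : HasDerivAt (fun t => exp (-t ^ 2 / 2)) (-t * exp (-t ^ 2 / 2)) t := by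
    refine ((hasDerivAt_pow 2 t).fun_neg.div_const 2).exp.congr_deriv ?_
    norm_num
    ring
  have hsq (t : ℝ) : exp (-t ^ 2 / 2) ^ 2 = exp (-1 * t ^ 2) := by
    rw [← exp_nat_mul]; ring_nf
  have hnorm (t : ℝ) : ‖(exp (-t ^ 2 / 2) : ℂ)‖ ^ 2 = exp (-1 * t ^ 2) := by
    rw [Complex.norm_real, Real.norm_of_nonneg (exp_pos _).le, hsq]
  have hnorm' (t : ℝ) :
      ‖deriv (fun t : ℝ => (exp (-t ^ 2 / 2) : ℂ)) t‖ ^ 2 = t ^ 2 * exp (-1 * t ^ 2) := by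
    rw [(hg t).ofReal_comp.deriv, Complex.norm_real, norm_mul, Real.norm_of_nonneg (exp_pos _).le,
      norm_neg, Real.norm_eq_abs, mul_pow, sq_abs, hsq]
  have hint : Integrable fun t : ℝ => t ^ 2 * exp (-1 * t ^ 2) := by
    simpa using integrable_rpow_mul_exp_neg_mul_sq one_pos (s := 2) (by norm_num)
  refine ⟨fun t => (exp (-t ^ 2 / 2) : ℂ),
    ⟨fun t => (hg t).ofReal_comp.differentiableAt, ?_, ?_, ?_⟩, ?_⟩
  · simpa only [hnorm] using (integrable_exp_neg_mul_sq one_pos).integrableOn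
  · simpa only [hnorm'] using hint.integrableOn
  · simpa only [hnorm] using hint.integrableOn
  · simp only [hnorm, integral_gaussian_Ioi]
    positivity

theorem one_sub_exp_div_le_robinMu {γ : ℝ} (hγ : 1 ≤ γ) (ξ : ℝ) :
    1 - exp (-γ ^ 2) / γ ≤ robinMu γ ξ := by
  obtain ⟨u₀, hu₀, hN₀⟩ := exists_memB1Half_integral_pos
  refine le_csInf ⟨_, u₀, hu₀, hN₀, rfl⟩ ?_
  rintro r ⟨u, hu, hN, rfl⟩
  rw [le_div_iff₀ hN]
  exact hu.one_sub_exp_div_mul_integral_le hγ ξ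

/-- There exist `C₀, γ₀ > 0` such that `Θ(γ) ≥ 1 - C₀ γ e^{-γ²}` for all `γ ≥ γ₀`. -/
theorem Theta_lower_bound_large_gamma :
    ∃ C₀ > (0:ℝ), ∃ γ₀ > (0:ℝ), ∀ γ : ℝ, γ₀ ≤ γ →
      1 - C₀ * γ * Real.exp (-γ ^ 2) ≤ Theta γ := by
  refine ⟨1, one_pos, 1, one_pos, fun γ hγ => ?_⟩
  calc 1 - 1 * γ * exp (-γ ^ 2) ≤ 1 - exp (-γ ^ 2) / γ := by
        rw [one_mul, sub_le_sub_iff_left, div_le_iff₀ (by linarith)]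
        nlinarith [exp_pos (-γ ^ 2), mul_le_mul hγ hγ zero_le_one (by linarith : (0 : ℝ) ≤ γ)]
    _ ≤ Theta γ := le_ciInf (one_sub_exp_div_le_robinMu hγ)
end
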